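/- Vertical tangent directions are annihilated by the MPS tangent map: let A be an MPS parameter with open boundary conditions, let x(n) be complex D_n×D_n matrices for n = 0,…,N with x(0) = 0 and x(N) = 0, let α ∈ ℂ, and define B^s(n) = A^s(n)·x(n) − x(n−1)·A^s(n) + α·A^s(n). Then Φ[B; A] = N·α·Ψ[A]; in particular, for α = 0 one has Φ[B; A] = 0. -/

import Mathlib

/-! Write `P_k` for the product of the first `k` site matrices and `S_k` for the product of
the remaining ones. Since `P_n A(n) = P_{n+1}` and `A(n) S_{n+1} = S_n`, the `n`-th summand of
`Φ[B; A]` is `tr(P_{n+1} x(n+1) S_{n+1}) - tr(P_n x(n) S_n) + α Ψ[A]`. The sum telescopes, and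
the boundary terms vanish because `x 0 = x N = 0`. -/

open Matrix

noncomputable section

namespace MPS

variable {N : ℕ} {q : Fin N → ℕ} {D : ℕ → ℕ}

/-- The partial ordered product `A^{s_0}(0) ⋯ A^{s_{k-1}}(k-1)`. -/
def prodAux (A : (n : Fin N) → Fin (q n) → Matrix (Fin (D n.val)) (Fin (D (n.val + 1))) ℂ)
    (s : (n : Fin N) → Fin (q n)) : (k : ℕ) → k ≤ N → Matrix (Fin (D 0)) (Fin (D k)) ℂ
  | 0, _ => 1
  | k + 1, h => prodAux A s k (Nat.le_of_succ_le h) * A ⟨k, h⟩ (s ⟨k, h⟩)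

/-- The matrix product state `Ψ[A]`, as the family of its coefficients
`tr[A^{s_1}(1) ⋯ A^{s_N}(N)]`. -/
def psi (hD : D N = D 0)
    (A : (n : Fin N) → Fin (q n) → Matrix (Fin (D n.val)) (Fin (D (n.val + 1))) ℂ) :
    ((n : Fin N) → Fin (q n)) → ℂ :=
  fun s => Matrix.trace ((prodAux A s N le_rfl).submatrix id (Fin.cast hD.symm))

/-- The MPS tangent vector `Φ[B; A]`, whose coefficient on the basis vector indexed by
`s` is `Σ_{n=1}^N tr[A^{s_1}(1) ⋯ B^{s_n}(n) ⋯ A^{s_N}(N)]`. -/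
def phi (hD : D N = D 0)
    (A B : (n : Fin N) → Fin (q n) → Matrix (Fin (D n.val)) (Fin (D (n.val + 1))) ℂ) :
    ((n : Fin N) → Fin (q n)) → ℂ :=
  fun s => ∑ n : Fin N, psi hD (Function.update A n (B n)) s

end MPS

namespace MPS

variable {N : ℕ} {q : Fin N → ℕ} {D : ℕ → ℕ}
  (A : (n : Fin N) → Fin (q n) → Matrix (Fin (D n.val)) (Fin (D (n.val + 1))) ℂ)
  (s : (n : Fin N) → Fin (q n))

def suffixProd (k : ℕ) (hk : k ≤ N) : Matrix (Fin (D k)) (Fin (D N)) ℂ :=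
  if h : k < N then A ⟨k, h⟩ (s ⟨k, h⟩) * suffixProd (k + 1) h
  else (1 : Matrix (Fin (D k)) (Fin (D k)) ℂ).submatrix id
    (Fin.cast (congrArg D (Nat.le_antisymm (not_lt.1 h) hk)))
termination_by N - k

theorem suffixProd_of_lt {k : ℕ} (h : k < N) :
    suffixProd A s k h.le = A ⟨k, h⟩ (s ⟨k, h⟩) * suffixProd A s (k + 1) h := by
  rw [suffixProd, dif_pos h]

theorem suffixProd_self : suffixProd A s N le_rfl = 1 := by
  rw [suffixProd, dif_neg (lt_irrefl N)]
  exact Matrix.submatrix_id_id _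

theorem prodAux_mul_suffixProd (k : ℕ) (hk : k ≤ N) :
    prodAux A s k hk * suffixProd A s k hk = prodAux A s N le_rfl := by
  by_cases h : k < N
  · rw [suffixProd_of_lt A s h, ← Matrix.mul_assoc]
    exact prodAux_mul_suffixProd (k + 1) h
  · obtain rfl : k = N := by omega
    rw [suffixProd_self, Matrix.mul_one]
termination_by N - k

variable {A} in
theorem prodAux_congr
    {A' : (n : Fin N) → Fin (q n) → Matrix (Fin (D n.val)) (Fin (D (n.val + 1))) ℂ}
    {k : ℕ} (hA : ∀ i : Fin N, i.val < k → A i = A' i) (hk : k ≤ N) :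
    prodAux A s k hk = prodAux A' s k hk := by
  induction k with
  | zero => rfl
  | succ k ih =>
    rw [prodAux, prodAux, ih (fun i hi => hA i (by omega)), hA ⟨k, hk⟩ (Nat.lt_succ_self k)]

variable {A} in
theorem suffixProd_congr
    {A' : (n : Fin N) → Fin (q n) → Matrix (Fin (D n.val)) (Fin (D (n.val + 1))) ℂ}
    {k : ℕ} (hA : ∀ i : Fin N, k ≤ i.val → A i = A' i) (hk : k ≤ N) :
    suffixProd A s k hk = suffixProd A' s k hk := by
  by_cases h : k < N
  · rw [suffixProd_of_lt A s h, suffixProd_of_lt A' s h, hA ⟨k, h⟩ le_rfl,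
      suffixProd_congr (fun i hi => hA i (by omega)) h]
  · obtain rfl : k = N := by omega
    rw [suffixProd_self, suffixProd_self]
termination_by N - k

theorem prodAux_update (n : Fin N)
    (c : Fin (q n) → Matrix (Fin (D n.val)) (Fin (D (n.val + 1))) ℂ) :
    prodAux (Function.update A n c) s N le_rfl
      = prodAux A s n n.isLt.le * c (s n) * suffixProd A s (n + 1) n.isLt := by
  rw [← prodAux_mul_suffixProd _ s (n + 1) n.isLt, prodAux,
    prodAux_congr s (A' := A) (fun i hi => Function.update_of_ne (Fin.ne_of_lt hi) _ _),
    suffixProd_congr s (A' := A) (fun i hi => Function.update_of_ne (Fin.ne_of_gt hi) _ _)]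
  simp only [Fin.eta, Function.update_self]

/-- `tr[P_k x(k) S_k]`, extended by `0` past `N` so that it can be telescoped over `ℕ`. -/
def insertionCoeff (hD : D N = D 0) (x : (k : ℕ) → Matrix (Fin (D k)) (Fin (D k)) ℂ) (k : ℕ) :
    ℂ :=
  if hk : k ≤ N then
    trace ((prodAux A s k hk * x k * suffixProd A s k hk).submatrix id (Fin.cast hD.symm))
  else 0

theorem insertionCoeff_of_le (hD : D N = D 0) (x : (k : ℕ) → Matrix (Fin (D k)) (Fin (D k)) ℂ)
    {k : ℕ} (hk : k ≤ N) :
    insertionCoeff A s hD x k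
      = trace ((prodAux A s k hk * x k * suffixProd A s k hk).submatrix id (Fin.cast hD.symm)) :=
  dif_pos hk

theorem psi_update_vertical (hD : D N = D 0) (x : (k : ℕ) → Matrix (Fin (D k)) (Fin (D k)) ℂ)
    (α : ℂ) (n : Fin N) :
    psi hD (Function.update A n (fun t => A n t * x (n + 1) - x n * A n t + α • A n t)) s
      = insertionCoeff A s hD x (n + 1) - insertionCoeff A s hD x n + α * psi hD A s := by
  have hsplit : prodAux A s n n.isLt.le
        * (A n (s n) * x (n + 1) - x n * A n (s n) + α • A n (s n)) * suffixProd A s (n + 1) n.isLt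
      = prodAux A s (n + 1) n.isLt * x (n + 1) * suffixProd A s (n + 1) n.isLt
        - prodAux A s n n.isLt.le * x n * suffixProd A s n n.isLt.le
        + α • prodAux A s N le_rfl := by
    rw [suffixProd_of_lt A s n.isLt, ← prodAux_mul_suffixProd A s (n + 1) n.isLt, prodAux]
    simp only [Matrix.mul_add, Matrix.mul_sub, Matrix.add_mul, Matrix.sub_mul, Matrix.mul_smul,
      Matrix.smul_mul, Matrix.mul_assoc]
  rw [psi, prodAux_update, hsplit, insertionCoeff_of_le A s hD x n.isLt,
    insertionCoeff_of_le A s hD x n.isLt.le, psi]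
  simp only [Matrix.submatrix_add, Matrix.submatrix_sub, Matrix.submatrix_smul, Pi.add_apply,
    Pi.sub_apply, Pi.smul_apply, Matrix.trace_add, Matrix.trace_sub, Matrix.trace_smul, smul_eq_mul]

end MPS

/-- **Vertical directions are annihilated by the MPS tangent map:** if
`B^s(n) = A^s(n)·x(n) − x(n−1)·A^s(n) + α·A^s(n)` with `x 0 = 0` and `x N = 0`, then
`Φ[B; A] = N·α·Ψ[A]` (in particular `Φ[B; A] = 0` for `α = 0`). -/
theorem mps_vertical_tangent (N : ℕ) (q : Fin N → ℕ) (D : ℕ → ℕ)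
    (h0 : D 0 = 1) (hN : D N = 1)
    (A : (n : Fin N) → Fin (q n) → Matrix (Fin (D n.val)) (Fin (D (n.val + 1))) ℂ)
    (x : (k : ℕ) → Matrix (Fin (D k)) (Fin (D k)) ℂ) (hx0 : x 0 = 0) (hxN : x N = 0)
    (α : ℂ) :
    MPS.phi (hN.trans h0.symm) A
        (fun n s => A n s * x (n.val + 1) - x n.val * A n s + α • A n s)
      = ((N : ℂ) * α) • MPS.psi (hN.trans h0.symm) A := by
  funext s
  have hfirst : MPS.insertionCoeff A s (hN.trans h0.symm) x 0 = 0 := by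
    simp [MPS.insertionCoeff_of_le A s _ x (Nat.zero_le N), hx0]
  have hlast : MPS.insertionCoeff A s (hN.trans h0.symm) x N = 0 := by
    simp [MPS.insertionCoeff_of_le A s _ x le_rfl, hxN]
  simp only [MPS.phi, MPS.psi_update_vertical, Pi.smul_apply, smul_eq_mul]
  rw [Fin.sum_univ_eq_sum_range (fun n => MPS.insertionCoeff A s _ x (n + 1)
      - MPS.insertionCoeff A s _ x n + α * MPS.psi _ A s), Finset.sum_add_distrib,
    Finset.sum_range_sub, hfirst, hlast, Finset.sum_const, Finset.card_range, nsmul_eq_mul]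
  ring
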